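/- arXiv:2103.05195 — 6 statements merged into one kernel-verified Lean document; each statement's English description precedes it below -/
import Mathlib

section
/- Let D ⊆ [n]², S ⊆ [n], and (r,c) ∈ D. Then (r,c) ∈ π_{D,S}⁻¹(S) if and only if #{(i,c) ∈ π_{D,S}⁻¹(S) : i < r} < #{i ∈ S : i ≤ r}. -/
namespace Schub

/-- The `n × n` grid `[n]²` (1-based). -/
def grid (n : ℕ) : Finset (ℕ × ℕ) := Finset.Icc 1 n ×ˢ Finset.Icc 1 n

/-- State of the bracket-matching stack in column `c` after reading rows `1,…,r`:
the set of rows that contributed a so-far unmatched `'('`. -/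
def openRows (D : Finset (ℕ × ℕ)) (S : Finset ℕ) (c : ℕ) : ℕ → Finset ℕ
  | 0 => ∅
  | r + 1 =>
    let st := openRows D S c r
    if (r + 1, c) ∉ D ∧ r + 1 ∈ S then insert (r + 1) st
    else if (r + 1, c) ∈ D ∧ r + 1 ∉ S then
      (if h : st.Nonempty then st.erase (st.max' h) else st)
    else st

/-- The label of box `(r,c)` in the tableau `π_{D,S}`. -/
def piLabel (D : Finset (ℕ × ℕ)) (S : Finset ℕ) (r c : ℕ) : Option ℕ :=
  if (r, c) ∈ D then
    if r ∈ S then some r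
    else if h : (openRows D S c (r - 1)).Nonempty then
      some ((openRows D S c (r - 1)).max' h)
    else none
  else none

/-- `θ_D^c(S)`: number of `⋆`'s plus matched `()` pairs in `word_{c,S}(D)`. -/
def thetaCol (n : ℕ) (D : Finset (ℕ × ℕ)) (S : Finset ℕ) (c : ℕ) : ℕ :=
  ((Finset.Icc 1 n).filter fun r => (r, c) ∈ D ∧ r ∈ S).card +
  ((Finset.Icc 1 n).filter fun r =>
      (r, c) ∈ D ∧ r ∉ S ∧ (openRows D S c (r - 1)).Nonempty).card

/-- `θ_D(S) = Σ_c θ_D^c(S)`. -/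
def theta (n : ℕ) (D : Finset (ℕ × ℕ)) (S : Finset ℕ) : ℕ :=
  ∑ c ∈ Finset.Icc 1 n, thetaCol n D S c

/-- `π_{D,S}⁻¹(S)`: boxes of `D` whose `π_{D,S}`-label lies in `S`. -/
def piInv (D : Finset (ℕ × ℕ)) (S : Finset ℕ) : Finset (ℕ × ℕ) :=
  D.filter fun b => ∃ s ∈ S, piLabel D S b.1 b.2 = some s

/-- `τ` is a tableau of shape `D` with labels in `[n] ∪ {∘}`. -/
def IsTab (n : ℕ) (D : Finset (ℕ × ℕ)) (τ : ℕ × ℕ → Option ℕ) : Prop :=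
  (∀ b, b ∉ D → τ b = none) ∧ ∀ b ∈ D, ∀ l, τ b = some l → l ∈ Finset.Icc 1 n

/-- Flagged: any label in row `r` is `≤ r`. -/
def Flagged (D : Finset (ℕ × ℕ)) (τ : ℕ × ℕ → Option ℕ) : Prop :=
  ∀ b ∈ D, ∀ l, τ b = some l → l ≤ b.1

/-- Column-injective: labels in each column are distinct. -/
def ColInj (D : Finset (ℕ × ℕ)) (τ : ℕ × ℕ → Option ℕ) : Prop :=
  ∀ b ∈ D, ∀ b' ∈ D, b.2 = b'.2 → b ≠ b' → ∀ l, τ b = some l → τ b' ≠ some l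

/-- `τ⁻¹(S)`: boxes of `D` whose label lies in `S`. -/
def labInv (D : Finset (ℕ × ℕ)) (τ : ℕ × ℕ → Option ℕ) (S : Finset ℕ) : Finset (ℕ × ℕ) :=
  D.filter fun b => ∃ s ∈ S, τ b = some s

/-- `τ` has content `α`. -/
def HasContent (n : ℕ) (D : Finset (ℕ × ℕ)) (τ : ℕ × ℕ → Option ℕ) (α : ℕ → ℕ) : Prop :=
  ∀ i ∈ Finset.Icc 1 n, (D.filter fun b => τ b = some i).card = α i

/-- Membership in `FCITab(D,α)`. -/
def IsFCI (n : ℕ) (D : Finset (ℕ × ℕ)) (τ : ℕ × ℕ → Option ℕ) (α : ℕ → ℕ) : Prop :=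
  IsTab n D τ ∧ Flagged D τ ∧ ColInj D τ ∧ HasContent n D τ α

/-- Membership in `PerfectTab(D,α)`: additionally no box is unlabelled. -/
def IsPerfect (n : ℕ) (D : Finset (ℕ × ℕ)) (τ : ℕ × ℕ → Option ℕ) (α : ℕ → ℕ) : Prop :=
  IsFCI n D τ α ∧ ∀ b ∈ D, τ b ≠ none

/-- The (lattice point) membership in the Schubitope `S_D`. -/
def InSchubitope (n : ℕ) (D : Finset (ℕ × ℕ)) (α : ℕ → ℕ) : Prop :=
  (∑ i ∈ Finset.Icc 1 n, α i) = D.card ∧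
  ∀ S ⊆ Finset.Icc 1 n, (∑ i ∈ S, α i) ≤ theta n D S

/-- Membership in the polytope `P(D,α)`. -/
def InP (n : ℕ) (D : Finset (ℕ × ℕ)) (α : ℕ → ℝ) (x : ℕ → ℕ → ℝ) : Prop :=
  (∀ i ∈ Finset.Icc 1 n, ∀ j ∈ Finset.Icc 1 n, 0 ≤ x i j ∧ x i j ≤ 1) ∧
  (∀ i ∈ Finset.Icc 1 n, (∑ j ∈ Finset.Icc 1 n, x i j) = α i) ∧
  (∀ j ∈ Finset.Icc 1 n, ∀ s ∈ Finset.Icc 1 n,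
    ((D.filter fun b => b.2 = j ∧ b.1 ≤ s).card : ℝ) ≤ ∑ i ∈ Finset.Icc 1 s, x i j)

lemma openRows_succ (D : Finset (ℕ × ℕ)) (S : Finset ℕ) (c r : ℕ) :
    openRows D S c (r + 1) =
      if (r + 1, c) ∉ D ∧ r + 1 ∈ S then insert (r + 1) (openRows D S c r)
      else if (r + 1, c) ∈ D ∧ r + 1 ∉ S then
        (if h : (openRows D S c r).Nonempty then
          (openRows D S c r).erase ((openRows D S c r).max' h)
        else openRows D S c r)
      else openRows D S c r := rfl

lemma openRows_prop (D : Finset (ℕ × ℕ)) (S : Finset ℕ) (c : ℕ) :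
    ∀ r, ∀ x ∈ openRows D S c r, x ∈ S ∧ x ≤ r := by
  intro r
  induction r with
  | zero => simp [openRows]
  | succ r ih =>
    intro x hx
    rw [openRows_succ] at hx
    split_ifs at hx with h1 h2 h3
    · rcases Finset.mem_insert.mp hx with rfl | hx
      · exact ⟨h1.2, le_refl _⟩
      · exact ⟨(ih x hx).1, (ih x hx).2.trans (Nat.le_succ r)⟩
    · have := ih x (Finset.mem_of_mem_erase hx)
      exact ⟨this.1, this.2.trans (Nat.le_succ r)⟩
    · have := ih x hx
      exact ⟨this.1, this.2.trans (Nat.le_succ r)⟩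
    · have := ih x hx
      exact ⟨this.1, this.2.trans (Nat.le_succ r)⟩

lemma mem_piInv_iff (D : Finset (ℕ × ℕ)) (S : Finset ℕ) {r c : ℕ} (hrc : (r, c) ∈ D) :
    (r, c) ∈ piInv D S ↔ (r ∈ S ∨ (openRows D S c (r - 1)).Nonempty) := by
  unfold piInv piLabel
  simp only [Finset.mem_filter, hrc, if_true, true_and]
  constructor
  · rintro ⟨s, hs, hlab⟩
    by_cases hr : r ∈ S
    · exact Or.inl hr
    · right
      rw [if_neg hr] at hlab
      split_ifs at hlab with h
      exact h
  · intro h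
    by_cases hr : r ∈ S
    · exact ⟨r, hr, by rw [if_pos hr]⟩
    · have hne : (openRows D S c (r - 1)).Nonempty := h.resolve_left hr
      refine ⟨(openRows D S c (r - 1)).max' hne,
        (openRows_prop D S c (r - 1) _ (Finset.max'_mem _ hne)).1, ?_⟩
      rw [if_neg hr, dif_pos hne]

lemma filter_le_succ_card (S : Finset ℕ) (r : ℕ) :
    (S.filter fun i => i ≤ r + 1).card =
      (S.filter fun i => i ≤ r).card + (if r + 1 ∈ S then 1 else 0) := by
  have hsplit : (S.filter fun i => i ≤ r + 1) =
      (S.filter fun i => i ≤ r) ∪ (S.filter fun i => i = r + 1) := by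
    ext x
    simp only [Finset.mem_filter, Finset.mem_union]
    have : x ≤ r + 1 ↔ x ≤ r ∨ x = r + 1 := by omega
    tauto
  rw [hsplit, Finset.card_union_of_disjoint]
  · congr 1
    rw [Finset.filter_eq']
    split_ifs <;> simp
  · simp only [Finset.disjoint_left, Finset.mem_filter]
    rintro x ⟨_, h⟩ ⟨_, rfl⟩
    omega

lemma filter_col_succ_card (T : Finset (ℕ × ℕ)) (c r : ℕ) :
    (T.filter fun b => b.2 = c ∧ b.1 ≤ r + 1).card =
      (T.filter fun b => b.2 = c ∧ b.1 ≤ r).card + (if (r + 1, c) ∈ T then 1 else 0) := by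
  have hsplit : (T.filter fun b => b.2 = c ∧ b.1 ≤ r + 1) =
      (T.filter fun b => b.2 = c ∧ b.1 ≤ r) ∪ (T.filter fun b => b = (r + 1, c)) := by
    ext ⟨x, y⟩
    simp only [Finset.mem_filter, Finset.mem_union, Prod.mk.injEq]
    have : x ≤ r + 1 ↔ x ≤ r ∨ x = r + 1 := by omega
    tauto
  rw [hsplit, Finset.card_union_of_disjoint]
  · congr 1
    rw [Finset.filter_eq']
    split_ifs <;> simp
  · simp only [Finset.disjoint_left, Finset.mem_filter]
    rintro ⟨x, y⟩ ⟨_, _, h⟩ ⟨_, heq⟩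
    have : x = r + 1 := congrArg Prod.fst heq
    omega

lemma bracket_invariant (n : ℕ) (D : Finset (ℕ × ℕ)) (hD : D ⊆ grid n)
    (S : Finset ℕ) (hS : S ⊆ Finset.Icc 1 n) (c : ℕ) :
    ∀ r, (S.filter fun i => i ≤ r).card =
      ((piInv D S).filter fun b => b.2 = c ∧ b.1 ≤ r).card + (openRows D S c r).card := by
  intro r
  induction r with
  | zero =>
    have h1 : (S.filter fun i => i ≤ 0) = ∅ := by
      rw [Finset.filter_eq_empty_iff]
      intro x hx
      have := hS hx
      rw [Finset.mem_Icc] at this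
      omega
    have h2 : ((piInv D S).filter fun b => b.2 = c ∧ b.1 ≤ 0) = ∅ := by
      rw [Finset.filter_eq_empty_iff]
      rintro ⟨x, y⟩ hx
      have hx' : (x, y) ∈ D := (Finset.mem_filter.mp hx).1
      have := hD hx'
      simp only [grid, Finset.mem_product, Finset.mem_Icc] at this
      intro hcon
      omega
    rw [h1, h2]
    simp [openRows]
  | succ r ih =>
    rw [filter_le_succ_card, filter_col_succ_card, openRows_succ]
    by_cases hd : (r + 1, c) ∈ D
    · by_cases hs : r + 1 ∈ S
      · have hmem : (r + 1, c) ∈ piInv D S := (mem_piInv_iff D S hd).mpr (Or.inl hs)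
        rw [if_pos hs, if_pos hmem,
          if_neg (show ¬((r + 1, c) ∉ D ∧ r + 1 ∈ S) from fun h => h.1 hd),
          if_neg (show ¬((r + 1, c) ∈ D ∧ r + 1 ∉ S) from fun h => h.2 hs)]
        omega
      · by_cases hne : (openRows D S c r).Nonempty
        · have hmem : (r + 1, c) ∈ piInv D S :=
            (mem_piInv_iff D S hd).mpr (Or.inr (by simpa using hne))
          rw [if_neg hs, if_pos hmem,
            if_neg (show ¬((r + 1, c) ∉ D ∧ r + 1 ∈ S) from fun h => h.1 hd),
            if_pos (show (r + 1, c) ∈ D ∧ r + 1 ∉ S from ⟨hd, hs⟩), dif_pos hne,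
            Finset.card_erase_of_mem (Finset.max'_mem _ hne)]
          have := Finset.card_pos.mpr hne
          omega
        · have hmem : (r + 1, c) ∉ piInv D S := by
            intro h
            rcases (mem_piInv_iff D S hd).mp h with h' | h'
            · exact hs h'
            · exact hne (by simpa using h')
          rw [if_neg hs, if_neg hmem,
            if_neg (show ¬((r + 1, c) ∉ D ∧ r + 1 ∈ S) from fun h => h.1 hd),
            if_pos (show (r + 1, c) ∈ D ∧ r + 1 ∉ S from ⟨hd, hs⟩), dif_neg hne]
          omega
    · have hmem : (r + 1, c) ∉ piInv D S := fun h => hd (Finset.mem_filter.mp h).1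
      by_cases hs : r + 1 ∈ S
      · rw [if_pos hs, if_neg hmem,
          if_pos (show (r + 1, c) ∉ D ∧ r + 1 ∈ S from ⟨hd, hs⟩),
          Finset.card_insert_of_notMem]
        · omega
        · intro hmem'
          have := (openRows_prop D S c r _ hmem').2
          omega
      · rw [if_neg hs, if_neg hmem,
          if_neg (show ¬((r + 1, c) ∉ D ∧ r + 1 ∈ S) from fun h => hs h.2),
          if_neg (show ¬((r + 1, c) ∈ D ∧ r + 1 ∉ S) from fun h => hd h.1)]
        omega

/-- For `D ⊆ [n]²`, `S ⊆ [n]`, and `(r,c) ∈ D`: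
`(r,c) ∈ π_{D,S}⁻¹(S)` iff `#{(i,c) ∈ π_{D,S}⁻¹(S) : i < r} < #{i ∈ S : i ≤ r}`. -/
theorem piInv_mem_iff (n : ℕ) (D : Finset (ℕ × ℕ)) (hD : D ⊆ grid n)
    (S : Finset ℕ) (hS : S ⊆ Finset.Icc 1 n)
    (r c : ℕ) (hrc : (r, c) ∈ D) :
    (r, c) ∈ piInv D S ↔
      ((piInv D S).filter fun b => b.2 = c ∧ b.1 < r).card < (S.filter fun i => i ≤ r).card := by
  have hgrid := hD hrc
  simp only [grid, Finset.mem_product, Finset.mem_Icc] at hgrid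
  obtain ⟨m, rfl⟩ : ∃ m, r = m + 1 := ⟨r - 1, by omega⟩
  have hlt : ((piInv D S).filter fun b => b.2 = c ∧ b.1 < m + 1) =
      ((piInv D S).filter fun b => b.2 = c ∧ b.1 ≤ m) := by
    ext b
    simp [Nat.lt_succ_iff]
  rw [hlt, filter_le_succ_card S m, bracket_invariant n D hD S hS c m,
    mem_piInv_iff D S hrc]
  have hopen : openRows D S c (m + 1 - 1) = openRows D S c m := rfl
  rw [hopen]
  constructor
  · rintro (hs | hne)
    · rw [if_pos hs]
      omega
    · have := Finset.card_pos.mpr hne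
      split_ifs <;> omega
  · intro h
    by_cases hs : m + 1 ∈ S
    · exact Or.inl hs
    · right
      rw [if_neg hs] at h
      exact Finset.card_pos.mp (by omega)

end Schub
end

section
/- For any D ⊆ [n]², S ⊆ [n], and any flagged column-injective tableau τ of shape D, #π_{D,S}⁻¹(S) ≥ #τ⁻¹(S). That is, the greedy tableau π_{D,S} maximizes the number of boxes labeled by elements of S among all flagged column-injective tableaux. -/
namespace Schub

/-! ### Auxiliary lemmas -/

lemma Icc_succ_right' (r : ℕ) : Finset.Icc 1 (r + 1) = insert (r + 1) (Finset.Icc 1 r) := by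
  ext x; simp only [Finset.mem_Icc, Finset.mem_insert]; omega

lemma openRows_zero (D : Finset (ℕ × ℕ)) (S : Finset ℕ) (c : ℕ) :
    openRows D S c 0 = ∅ := rfl

lemma openRows_mem (D : Finset (ℕ × ℕ)) (S : Finset ℕ) (c : ℕ) :
    ∀ r, ∀ s ∈ openRows D S c r, s ∈ S ∧ 1 ≤ s ∧ s ≤ r ∧ (s, c) ∉ D := by
  intro r
  induction r with
  | zero => intro s hs; simp [openRows_zero] at hs
  | succ r ih =>
    intro s hs
    rw [openRows_succ] at hs
    split_ifs at hs with h1 h2 h3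
    · rcases Finset.mem_insert.1 hs with rfl | hs
      · exact ⟨h1.2, by omega, le_rfl, h1.1⟩
      · obtain ⟨a, b, c', d⟩ := ih s hs; exact ⟨a, b, by omega, d⟩
    · obtain ⟨a, b, c', d⟩ := ih s (Finset.mem_of_mem_erase hs); exact ⟨a, b, by omega, d⟩
    · obtain ⟨a, b, c', d⟩ := ih s hs; exact ⟨a, b, by omega, d⟩
    · obtain ⟨a, b, c', d⟩ := ih s hs; exact ⟨a, b, by omega, d⟩

/-- Number of matched closing brackets (pops) among rows `1,…,r`. -/
def popCnt (D : Finset (ℕ × ℕ)) (S : Finset ℕ) (c r : ℕ) : ℕ :=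
  ((Finset.Icc 1 r).filter fun s =>
      (s, c) ∈ D ∧ s ∉ S ∧ (openRows D S c (s - 1)).Nonempty).card

/-- Number of opening brackets (pushes) among rows `1,…,r`. -/
def openCnt (D : Finset (ℕ × ℕ)) (S : Finset ℕ) (c r : ℕ) : ℕ :=
  ((Finset.Icc 1 r).filter fun s => (s, c) ∉ D ∧ s ∈ S).card

/-- Number of `⋆`'s among rows `1,…,r`. -/
def starCnt (D : Finset (ℕ × ℕ)) (S : Finset ℕ) (c r : ℕ) : ℕ :=
  ((Finset.Icc 1 r).filter fun s => (s, c) ∈ D ∧ s ∈ S).card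

lemma card_add_pop (D : Finset (ℕ × ℕ)) (S : Finset ℕ) (c : ℕ) :
    ∀ r, (openRows D S c r).card + popCnt D S c r = openCnt D S c r := by
  intro r
  induction r with
  | zero => simp [openRows_zero, popCnt, openCnt]
  | succ r ih =>
    have hnm : ∀ (p : ℕ → Prop) (hp : DecidablePred p),
        r + 1 ∉ (Finset.Icc 1 r).filter p := by
      intro p hp h
      have := Finset.mem_of_mem_filter _ h
      simp at this
    unfold popCnt openCnt at ih ⊢
    rw [Icc_succ_right', Finset.filter_insert, Finset.filter_insert, openRows_succ]
    simp only [Nat.add_sub_cancel]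
    by_cases hD1 : (r + 1, c) ∈ D <;> by_cases hS1 : r + 1 ∈ S
    · -- star: nothing changes
      have hA : ¬((r + 1, c) ∉ D ∧ r + 1 ∈ S) := fun h => h.1 hD1
      have hB : ¬((r + 1, c) ∈ D ∧ r + 1 ∉ S) := fun h => h.2 hS1
      have hC : ¬((r + 1, c) ∈ D ∧ r + 1 ∉ S ∧ (openRows D S c r).Nonempty) :=
        fun h => h.2.1 hS1
      simp only [if_neg hA, if_neg hB, if_neg hC]
      exact ih
    · -- close
      have hA : ¬((r + 1, c) ∉ D ∧ r + 1 ∈ S) := fun h => h.1 hD1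
      have hB : (r + 1, c) ∈ D ∧ r + 1 ∉ S := ⟨hD1, hS1⟩
      by_cases hne : (openRows D S c r).Nonempty
      · have hC : (r + 1, c) ∈ D ∧ r + 1 ∉ S ∧ (openRows D S c r).Nonempty :=
          ⟨hD1, hS1, hne⟩
        simp only [if_neg hA, if_pos hB, dif_pos hne, if_pos hC]
        rw [Finset.card_insert_of_notMem (hnm _ _),
          Finset.card_erase_of_mem (Finset.max'_mem _ hne)]
        have hpos : 1 ≤ (openRows D S c r).card := Finset.card_pos.2 hne
        omega
      · have hC : ¬((r + 1, c) ∈ D ∧ r + 1 ∉ S ∧ (openRows D S c r).Nonempty) :=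
          fun h => hne h.2.2
        simp only [if_neg hA, if_pos hB, dif_neg hne, if_neg hC]
        exact ih
    · -- open: push
      have hA : (r + 1, c) ∉ D ∧ r + 1 ∈ S := ⟨hD1, hS1⟩
      have hB : ¬((r + 1, c) ∈ D ∧ r + 1 ∉ S) := fun h => hD1 h.1
      have hC : ¬((r + 1, c) ∈ D ∧ r + 1 ∉ S ∧ (openRows D S c r).Nonempty) :=
        fun h => hD1 h.1
      simp only [if_pos hA, if_neg hB, if_neg hC]
      have hmem : r + 1 ∉ openRows D S c r := by
        intro h
        have := (openRows_mem D S c r (r + 1) h).2.2.1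
        omega
      rw [Finset.card_insert_of_notMem (hnm _ _), Finset.card_insert_of_notMem hmem]
      omega
    · -- blank
      have hA : ¬((r + 1, c) ∉ D ∧ r + 1 ∈ S) := fun h => hS1 h.2
      have hB : ¬((r + 1, c) ∈ D ∧ r + 1 ∉ S) := fun h => hD1 h.1
      have hC : ¬((r + 1, c) ∈ D ∧ r + 1 ∉ S ∧ (openRows D S c r).Nonempty) :=
        fun h => hD1 h.1
      simp only [if_neg hA, if_neg hB, if_neg hC]
      exact ih

lemma piLabel_mem_iff (D : Finset (ℕ × ℕ)) (S : Finset ℕ) (r c : ℕ) :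
    ((r, c) ∈ D ∧ ∃ s ∈ S, piLabel D S r c = some s) ↔
      (((r, c) ∈ D ∧ r ∈ S) ∨
        ((r, c) ∈ D ∧ r ∉ S ∧ (openRows D S c (r - 1)).Nonempty)) := by
  constructor
  · rintro ⟨hD, s, hsS, hlab⟩
    unfold piLabel at hlab
    rw [if_pos hD] at hlab
    by_cases hS' : r ∈ S
    · exact Or.inl ⟨hD, hS'⟩
    · rw [if_neg hS'] at hlab
      by_cases hne : (openRows D S c (r - 1)).Nonempty
      · exact Or.inr ⟨hD, hS', hne⟩
      · rw [dif_neg hne] at hlab; cases hlab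
  · rintro (⟨hD, hS'⟩ | ⟨hD, hS', hne⟩)
    · exact ⟨hD, r, hS', by unfold piLabel; rw [if_pos hD, if_pos hS']⟩
    · refine ⟨hD, (openRows D S c (r - 1)).max' hne,
        (openRows_mem D S c (r - 1) _ (Finset.max'_mem _ hne)).1, ?_⟩
      unfold piLabel
      rw [if_pos hD, if_neg hS', dif_pos hne]

/-- The per-column inequality: the greedy tableau's count of `S`-labelled boxes in
column `c` is at least that of any flagged column-injective tableau. -/
lemma perCol (n : ℕ) (D : Finset (ℕ × ℕ)) (hD : D ⊆ grid n) (S : Finset ℕ)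
    (hS : S ⊆ Finset.Icc 1 n) (τ : ℕ × ℕ → Option ℕ) (hTab : IsTab n D τ)
    (hF : Flagged D τ) (hC : ColInj D τ) (c : ℕ) :
    ((Finset.Icc 1 n).filter fun r => (r, c) ∈ D ∧ ∃ s ∈ S, τ (r, c) = some s).card ≤
    ((Finset.Icc 1 n).filter fun r =>
        (r, c) ∈ D ∧ ∃ s ∈ S, piLabel D S r c = some s).card := by
  classical
  -- The greedy count equals starCnt + popCnt.
  have hG : ((Finset.Icc 1 n).filter fun r =>
      (r, c) ∈ D ∧ ∃ s ∈ S, piLabel D S r c = some s).card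
      = starCnt D S c n + popCnt D S c n := by
    have heq : ((Finset.Icc 1 n).filter fun r =>
        (r, c) ∈ D ∧ ∃ s ∈ S, piLabel D S r c = some s)
        = ((Finset.Icc 1 n).filter fun r => ((r, c) ∈ D ∧ r ∈ S) ∨
            ((r, c) ∈ D ∧ r ∉ S ∧ (openRows D S c (r - 1)).Nonempty)) := by
      apply Finset.filter_congr
      intro r _
      simpa using piLabel_mem_iff D S r c
    rw [heq, Finset.filter_or, Finset.card_union_of_disjoint]
    · rw [starCnt, popCnt]
    · rw [Finset.disjoint_filter]
      rintro r _ ⟨-, hrS⟩ ⟨-, hrS', -⟩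
      exact hrS' hrS
  rw [hG]
  -- r* : the last moment the stack is empty.
  set P : ℕ → Prop := fun r => openRows D S c r = ∅ with hP
  have hP0 : P 0 := rfl
  set rs : ℕ := Nat.findGreatest P n with hrs
  have hrsn : rs ≤ n := Nat.findGreatest_le n
  have hEmpty : openRows D S c rs = ∅ := Nat.findGreatest_spec (Nat.zero_le n) hP0
  have hgt : ∀ k, rs < k → k ≤ n → openRows D S c k ≠ ∅ := fun k hk hkn =>
    Nat.findGreatest_is_greatest hk hkn
  -- every close after rs is matched
  have hpopgt : ∀ k, rs < k → k ≤ n → (k, c) ∈ D → k ∉ S →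
      (openRows D S c (k - 1)).Nonempty := by
    intro k hk hkn hkD hkS
    by_contra hne
    obtain ⟨m, rfl⟩ : ∃ m, k = m + 1 := ⟨k - 1, by omega⟩
    have hm : openRows D S c m = ∅ := by
      simpa using Finset.not_nonempty_iff_eq_empty.1 hne
    apply hgt (m + 1) hk hkn
    rw [openRows_succ, if_neg (by simp [hkD]), if_pos ⟨hkD, hkS⟩, dif_neg (by simp [hm]), hm]
  -- counting splits at rs
  have hpop_split : popCnt D S c n = popCnt D S c rs +
      ((Finset.Icc 1 n).filter fun s => (s, c) ∈ D ∧ s ∉ S ∧ rs < s).card := by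
    rw [popCnt, popCnt,
      ← Finset.card_filter_add_card_filter_not (s := (Finset.Icc 1 n).filter fun s =>
        (s, c) ∈ D ∧ s ∉ S ∧ (openRows D S c (s - 1)).Nonempty) (p := fun s => s ≤ rs)]
    congr 1
    · rw [Finset.filter_filter]
      refine congrArg Finset.card (Finset.ext fun s => ?_)
      simp only [Finset.mem_filter, Finset.mem_Icc]
      constructor
      · exact fun h => ⟨⟨h.1.1, h.2.2⟩, h.2.1⟩
      · exact fun h => ⟨⟨h.1.1, le_trans h.1.2 hrsn⟩, h.2, h.1.2⟩
    · rw [Finset.filter_filter]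
      refine congrArg Finset.card (Finset.ext fun s => ?_)
      simp only [Finset.mem_filter, Finset.mem_Icc, not_le]
      constructor
      · exact fun h => ⟨h.1, h.2.1.1, h.2.1.2.1, h.2.2⟩
      · exact fun h => ⟨h.1, ⟨h.2.1, h.2.2.1,
          hpopgt s h.2.2.2 h.1.2 h.2.1 h.2.2.1⟩, h.2.2.2⟩
  have hstar_split : starCnt D S c n = starCnt D S c rs +
      ((Finset.Icc 1 n).filter fun s => (s, c) ∈ D ∧ s ∈ S ∧ rs < s).card := by
    rw [starCnt, starCnt,
      ← Finset.card_filter_add_card_filter_not (s := (Finset.Icc 1 n).filter fun s =>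
        (s, c) ∈ D ∧ s ∈ S) (p := fun s => s ≤ rs)]
    congr 1
    · rw [Finset.filter_filter]
      refine congrArg Finset.card (Finset.ext fun s => ?_)
      simp only [Finset.mem_filter, Finset.mem_Icc]
      constructor
      · exact fun h => ⟨⟨h.1.1, h.2.2⟩, h.2.1⟩
      · exact fun h => ⟨⟨h.1.1, le_trans h.1.2 hrsn⟩, h.2, h.1.2⟩
    · rw [Finset.filter_filter]
      refine congrArg Finset.card (Finset.ext fun s => ?_)
      simp only [Finset.mem_filter, Finset.mem_Icc, not_le]
      tauto
  -- |S ∩ [1, rs]|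
  have hSS : ((Finset.Icc 1 rs).filter fun s => s ∈ S).card
      = starCnt D S c rs + openCnt D S c rs := by
    rw [starCnt, openCnt,
      ← Finset.card_filter_add_card_filter_not (s := (Finset.Icc 1 rs).filter fun s =>
        s ∈ S) (p := fun s => (s, c) ∈ D)]
    congr 1
    · rw [Finset.filter_filter]
      exact congrArg Finset.card (Finset.filter_congr fun s _ => by tauto)
    · rw [Finset.filter_filter]
      exact congrArg Finset.card (Finset.filter_congr fun s _ => by tauto)
  have hoc : openCnt D S c rs = popCnt D S c rs := by
    have := card_add_pop D S c rs
    rw [hEmpty] at this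
    simpa using this.symm
  -- the D-boxes after rs, split into closes and stars
  have hDgt : ((Finset.Icc 1 n).filter fun s => (s, c) ∈ D ∧ rs < s).card
      = ((Finset.Icc 1 n).filter fun s => (s, c) ∈ D ∧ s ∈ S ∧ rs < s).card
        + ((Finset.Icc 1 n).filter fun s => (s, c) ∈ D ∧ s ∉ S ∧ rs < s).card := by
    rw [← Finset.card_filter_add_card_filter_not (s := (Finset.Icc 1 n).filter fun s =>
      (s, c) ∈ D ∧ rs < s) (p := fun s => s ∈ S)]
    congr 1
    · rw [Finset.filter_filter]
      exact congrArg Finset.card (Finset.filter_congr fun s _ => by tauto)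
    · rw [Finset.filter_filter]
      exact congrArg Finset.card (Finset.filter_congr fun s _ => by tauto)
  -- split T at rs
  set T := (Finset.Icc 1 n).filter fun r => (r, c) ∈ D ∧ ∃ s ∈ S, τ (r, c) = some s with hT
  have hTsplit : T.card = (T.filter fun r => r ≤ rs).card
      + (T.filter fun r => ¬ r ≤ rs).card :=
    (Finset.card_filter_add_card_filter_not _).symm
  -- rows ≤ rs inject into S ∩ [1, rs] via their labels
  have hT1 : (T.filter fun r => r ≤ rs).card
      ≤ ((Finset.Icc 1 rs).filter fun s => s ∈ S).card := by
    apply Finset.card_le_card_of_injOn (fun r => (τ (r, c)).getD 0)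
    · intro r hr
      simp only [hT, Finset.mem_coe, Finset.mem_filter, Finset.mem_Icc] at hr
      obtain ⟨⟨⟨hr1, hr2⟩, hrD, s, hsS, hτ⟩, hrs'⟩ := hr
      have h1 : 1 ≤ s := (Finset.mem_Icc.1 (hS hsS)).1
      have h2 : s ≤ r := hF (r, c) hrD s hτ
      simp only [Finset.mem_coe, Finset.mem_filter, Finset.mem_Icc, hτ, Option.getD_some]
      exact ⟨⟨h1, le_trans h2 hrs'⟩, hsS⟩
    · intro r hr r' hr' hff
      simp only [hT, Finset.coe_filter, Set.mem_setOf_eq, Finset.mem_filter,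
        Finset.mem_Icc] at hr hr'
      obtain ⟨⟨⟨hr1, hr2⟩, hrD, s, hsS, hτ⟩, hrs'⟩ := hr
      obtain ⟨⟨⟨hr1', hr2'⟩, hrD', s', hsS', hτ'⟩, hrs''⟩ := hr'
      have hff' : s = s' := by simpa [hτ, hτ'] using hff
      subst hff'
      by_contra hne
      exact hC (r, c) hrD (r', c) hrD' rfl (by simp [hne]) s hτ (by rw [hτ'])
  -- rows > rs are at most all D-boxes after rs
  have hT2 : (T.filter fun r => ¬ r ≤ rs).card
      ≤ ((Finset.Icc 1 n).filter fun s => (s, c) ∈ D ∧ rs < s).card := by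
    apply Finset.card_le_card
    intro r hr
    simp only [hT, Finset.mem_filter, not_le] at hr ⊢
    exact ⟨hr.1.1, hr.1.2.1, hr.2⟩
  calc T.card = (T.filter fun r => r ≤ rs).card + (T.filter fun r => ¬ r ≤ rs).card :=
        hTsplit
    _ ≤ ((Finset.Icc 1 rs).filter fun s => s ∈ S).card
        + ((Finset.Icc 1 n).filter fun s => (s, c) ∈ D ∧ rs < s).card :=
        Nat.add_le_add hT1 hT2
    _ = starCnt D S c n + popCnt D S c n := by
        rw [hSS, hoc, hDgt, hstar_split, hpop_split]; omega

/-- Decomposing a count over `D` into column counts. -/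
lemma decomp (n : ℕ) (D : Finset (ℕ × ℕ)) (hD : D ⊆ grid n)
    (P : ℕ × ℕ → Prop) [DecidablePred P] :
    (D.filter P).card
      = ∑ c ∈ Finset.Icc 1 n,
          ((Finset.Icc 1 n).filter fun r => (r, c) ∈ D ∧ P (r, c)).card := by
  classical
  have h1 : D.filter P = (grid n).filter fun b => b ∈ D ∧ P b := by
    ext b
    simp only [Finset.mem_filter]
    exact ⟨fun ⟨h, h'⟩ => ⟨hD h, h, h'⟩, fun ⟨_, h, h'⟩ => ⟨h, h'⟩⟩
  rw [h1, Finset.card_filter, grid, Finset.sum_product, Finset.sum_comm]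
  apply Finset.sum_congr rfl
  intro c _
  rw [Finset.card_filter]

/-- For any `D ⊆ [n]²`, `S ⊆ [n]`, and any flagged column-injective tableau `τ` of
shape `D`, `#π_{D,S}⁻¹(S) ≥ #τ⁻¹(S)`. -/
theorem piInv_card_maximal (n : ℕ) (D : Finset (ℕ × ℕ)) (hD : D ⊆ grid n)
    (S : Finset ℕ) (hS : S ⊆ Finset.Icc 1 n)
    (τ : ℕ × ℕ → Option ℕ) (hTab : IsTab n D τ) (hF : Flagged D τ) (hC : ColInj D τ) :
    (labInv D τ S).card ≤ (piInv D S).card := by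
  classical
  unfold labInv piInv
  rw [decomp n D hD, decomp n D hD]
  apply Finset.sum_le_sum
  intro c _
  have h := perCol n D hD S hS τ hTab hF hC c
  convert h using 2

end Schub
end

section
/- Let D ⊆ [n]² and let S, T ⊆ [n] be disjoint. Set D̃ = D ∖ π_{D,S}⁻¹(S) and U = S ∪ T. Then π_{D,U}⁻¹(U) = π_{D,S}⁻¹(S) ∪ π_{D̃,T}⁻¹(T). -/
namespace Schub

lemma openRows_subset (D : Finset (ℕ × ℕ)) (S : Finset ℕ) (c : ℕ) :
    ∀ r, openRows D S c r ⊆ S := by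
  intro r
  induction r with
  | zero => simp [openRows]
  | succ r ih =>
    rw [openRows_succ]
    split_ifs with h1 h2 h3
    · exact Finset.insert_subset h1.2 ih
    · exact (Finset.erase_subset _ _).trans ih
    · exact ih
    · exact ih

lemma openRows_le (D : Finset (ℕ × ℕ)) (S : Finset ℕ) (c : ℕ) :
    ∀ r, ∀ x ∈ openRows D S c r, x ≤ r := by
  intro r
  induction r with
  | zero => simp [openRows]
  | succ r ih =>
    intro x hx
    rw [openRows_succ] at hx
    split_ifs at hx with h1 h2 h3
    · rcases Finset.mem_insert.1 hx with rfl | hx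
      · exact le_refl _
      · exact (ih x hx).trans (Nat.le_succ r)
    · exact (ih x (Finset.mem_of_mem_erase hx)).trans (Nat.le_succ r)
    · exact (ih x hx).trans (Nat.le_succ r)
    · exact (ih x hx).trans (Nat.le_succ r)

lemma mem_piInv (D : Finset (ℕ × ℕ)) (S : Finset ℕ) (r c : ℕ) :
    (r + 1, c) ∈ piInv D S ↔
      (r + 1, c) ∈ D ∧ (r + 1 ∈ S ∨ (openRows D S c r).Nonempty) := by
  unfold piInv piLabel
  simp only [Finset.mem_filter, Nat.add_sub_cancel]
  constructor
  · rintro ⟨hD, s, hs, hlab⟩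
    refine ⟨hD, ?_⟩
    by_cases hS : r + 1 ∈ S
    · exact Or.inl hS
    · right
      by_cases hne : (openRows D S c r).Nonempty
      · exact hne
      · simp [hD, hS, hne] at hlab
  · rintro ⟨hD, hS | hne⟩
    · exact ⟨hD, r + 1, hS, by simp [hD, hS]⟩
    · by_cases hS : r + 1 ∈ S
      · exact ⟨hD, r + 1, hS, by simp [hD, hS]⟩
      · refine ⟨hD, (openRows D S c r).max' hne,
          openRows_subset D S c r (Finset.max'_mem _ hne), by simp [hD, hS, hne]⟩

lemma notMem_openRows_succ (D : Finset (ℕ × ℕ)) (S : Finset ℕ) (c r : ℕ) :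
    r + 1 ∉ openRows D S c r := fun h => absurd (openRows_le D S c r _ h) (by omega)

lemma card_open (D : Finset (ℕ × ℕ)) (S T : Finset ℕ) (hdisj : Disjoint S T) (c : ℕ) :
    ∀ r, (openRows D (S ∪ T) c r).card
      = (openRows D S c r).card + (openRows (D \ piInv D S) T c r).card := by
  intro r
  induction r with
  | zero => simp [openRows]
  | succ r ih =>
    rw [openRows_succ, openRows_succ, openRows_succ]
    by_cases hmD : (r + 1, c) ∈ D
    · by_cases hmS : r + 1 ∈ S
      · have hmT : r + 1 ∉ T := fun h => Finset.disjoint_left.mp hdisj hmS h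
        have hpi : (r + 1, c) ∈ piInv D S := (mem_piInv D S r c).2 ⟨hmD, Or.inl hmS⟩
        have hnd : (r + 1, c) ∉ D \ piInv D S := by simp [hpi]
        rw [if_neg (by tauto), if_neg (by simp [hmS]), if_neg (by tauto),
          if_neg (by tauto), if_neg (by tauto), if_neg (by tauto)]
        exact ih
      · by_cases hmT : r + 1 ∈ T
        · by_cases hBne : (openRows D S c r).Nonempty
          · have hpi : (r + 1, c) ∈ piInv D S := (mem_piInv D S r c).2 ⟨hmD, Or.inr hBne⟩
            have hnd : (r + 1, c) ∉ D \ piInv D S := by simp [hpi]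
            rw [if_neg (by tauto), if_neg (by simp [hmT]), if_neg (by tauto),
              if_pos ⟨hmD, hmS⟩, dif_pos hBne, if_pos ⟨hnd, hmT⟩,
              Finset.card_insert_of_notMem (notMem_openRows_succ _ _ _ _),
              Finset.card_erase_of_mem (Finset.max'_mem _ hBne)]
            have hBc : 0 < (openRows D S c r).card := Finset.card_pos.2 hBne
            omega
          · have hpi : (r + 1, c) ∉ piInv D S := fun h =>
              hBne (((mem_piInv D S r c).1 h).2.resolve_left hmS)
            have hnd : (r + 1, c) ∈ D \ piInv D S := by simp [hmD, hpi]
            rw [if_neg (by tauto), if_neg (by simp [hmT]), if_neg (by tauto),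
              if_pos ⟨hmD, hmS⟩, dif_neg hBne, if_neg (by tauto), if_neg (by simp [hmT])]
            exact ih
        · have hmU : r + 1 ∉ S ∪ T := by simp [hmS, hmT]
          by_cases hBne : (openRows D S c r).Nonempty
          · have hAne : (openRows D (S ∪ T) c r).Nonempty := by
              rw [← Finset.card_pos] at hBne ⊢
              omega
            have hpi : (r + 1, c) ∈ piInv D S := (mem_piInv D S r c).2 ⟨hmD, Or.inr hBne⟩
            have hnd : (r + 1, c) ∉ D \ piInv D S := by simp [hpi]
            rw [if_neg (by tauto), if_pos ⟨hmD, hmU⟩, if_neg (by tauto),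
              if_pos ⟨hmD, hmS⟩, if_neg (by tauto), if_neg (by tauto),
              dif_pos hAne, dif_pos hBne,
              Finset.card_erase_of_mem (Finset.max'_mem _ hAne),
              Finset.card_erase_of_mem (Finset.max'_mem _ hBne)]
            have hBc : 0 < (openRows D S c r).card := Finset.card_pos.2 hBne
            have hAc : 0 < (openRows D (S ∪ T) c r).card := Finset.card_pos.2 hAne
            omega
          · have hpi : (r + 1, c) ∉ piInv D S := fun h =>
              hBne (((mem_piInv D S r c).1 h).2.resolve_left hmS)
            have hnd : (r + 1, c) ∈ D \ piInv D S := by simp [hmD, hpi]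
            rw [if_neg (by tauto), if_pos ⟨hmD, hmU⟩, if_neg (by tauto),
              if_pos ⟨hmD, hmS⟩, if_neg (by tauto), if_pos ⟨hnd, hmT⟩, dif_neg hBne]
            by_cases hCne : (openRows (D \ piInv D S) T c r).Nonempty
            · have hAne : (openRows D (S ∪ T) c r).Nonempty := by
                rw [← Finset.card_pos] at hCne ⊢
                omega
              rw [dif_pos hAne, dif_pos hCne,
                Finset.card_erase_of_mem (Finset.max'_mem _ hAne),
                Finset.card_erase_of_mem (Finset.max'_mem _ hCne)]
              have hCc : 0 < (openRows (D \ piInv D S) T c r).card := Finset.card_pos.2 hCne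
              have hAc : 0 < (openRows D (S ∪ T) c r).card := Finset.card_pos.2 hAne
              omega
            · have hAne : ¬ (openRows D (S ∪ T) c r).Nonempty := by
                rw [← Finset.card_pos] at hCne hBne ⊢
                omega
              rw [dif_neg hAne, dif_neg hCne]
              exact ih
    · have hnd : (r + 1, c) ∉ D \ piInv D S := by simp [hmD]
      by_cases hmS : r + 1 ∈ S
      · have hmT : r + 1 ∉ T := fun h => Finset.disjoint_left.mp hdisj hmS h
        rw [if_pos ⟨hmD, by simp [hmS]⟩, if_pos ⟨hmD, hmS⟩, if_neg (by tauto),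
          if_neg (by tauto),
          Finset.card_insert_of_notMem (notMem_openRows_succ _ _ _ _),
          Finset.card_insert_of_notMem (notMem_openRows_succ _ _ _ _)]
        omega
      · by_cases hmT : r + 1 ∈ T
        · rw [if_pos ⟨hmD, by simp [hmT]⟩, if_neg (by tauto), if_neg (by tauto),
            if_pos ⟨hnd, hmT⟩,
            Finset.card_insert_of_notMem (notMem_openRows_succ _ _ _ _),
            Finset.card_insert_of_notMem (notMem_openRows_succ _ _ _ _)]
          omega
        · rw [if_neg (by simp [hmS, hmT]), if_neg (by tauto), if_neg (by tauto),
            if_neg (by tauto), if_neg (by tauto), if_neg (by tauto)]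
          exact ih

/-- Let `D ⊆ [n]²` and `S, T ⊆ [n]` be disjoint.  With `D̃ = D ∖ π_{D,S}⁻¹(S)` and
`U = S ∪ T`, we have `π_{D,U}⁻¹(U) = π_{D,S}⁻¹(S) ∪ π_{D̃,T}⁻¹(T)`. -/
theorem piInv_union (n : ℕ) (D : Finset (ℕ × ℕ)) (hD : D ⊆ grid n)
    (S T : Finset ℕ) (hS : S ⊆ Finset.Icc 1 n) (hT : T ⊆ Finset.Icc 1 n)
    (hdisj : Disjoint S T) :
    piInv D (S ∪ T) = piInv D S ∪ piInv (D \ piInv D S) T := by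
  ext b
  obtain ⟨r, c⟩ := b
  simp only [Finset.mem_union]
  by_cases hmD : (r, c) ∈ D
  · have hr1 : 1 ≤ r := by
      have := hD hmD
      simp only [grid, Finset.mem_product, Finset.mem_Icc] at this
      exact this.1.1
    obtain ⟨r', rfl⟩ : ∃ r', r = r' + 1 := ⟨r - 1, by omega⟩
    have hmD' : ((r' + 1, c) ∈ D \ piInv D S) ↔ (r' + 1, c) ∉ piInv D S := by
      simp [Finset.mem_sdiff, hmD]
    have hcard := card_open D S T hdisj c r'
    have hne : (openRows D (S ∪ T) c r').Nonempty ↔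
        (openRows D S c r').Nonempty ∨ (openRows (D \ piInv D S) T c r').Nonempty := by
      simp only [← Finset.card_pos]
      omega
    rw [mem_piInv, mem_piInv, mem_piInv, hmD', mem_piInv, Finset.mem_union, hne]
    tauto
  · simp [piInv, Finset.mem_filter, Finset.mem_sdiff, hmD]
    exact fun h => hmD (Finset.mem_sdiff.1 (Finset.mem_filter.1 h).1).1


end Schub
end

section
/- Let D ⊆ [n]² and α ∈ ℤ_{≥0}^n. Then PerfectTab(D,α) ≠ ∅ if and only if α₁ + ⋯ + α_n = #D and FCITab(D,α) ≠ ∅. -/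
namespace Schub

/-- `PerfectTab(D,α) ≠ ∅` iff `α₁+⋯+α_n = #D` and `FCITab(D,α) ≠ ∅`. -/
theorem perfect_iff_sum_and_fci (n : ℕ) (D : Finset (ℕ × ℕ)) (hD : D ⊆ grid n)
    (α : ℕ → ℕ) :
    (∃ τ : ℕ × ℕ → Option ℕ, IsPerfect n D τ α) ↔
      ((∑ i ∈ Finset.Icc 1 n, α i) = D.card ∧ ∃ τ : ℕ × ℕ → Option ℕ, IsFCI n D τ α) := by
  have key : ∀ τ : ℕ × ℕ → Option ℕ, IsFCI n D τ α →
      (∑ i ∈ Finset.Icc 1 n, α i) =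
        ((Finset.Icc 1 n).biUnion fun i => D.filter fun b => τ b = some i).card := by
    intro τ ⟨_, _, _, hcont⟩
    rw [Finset.card_biUnion]
    · exact Finset.sum_congr rfl fun i hi => (hcont i hi).symm
    · intro i _ j _ hij
      refine Finset.disjoint_left.mpr fun b hb hb' => ?_
      simp only [Finset.mem_filter] at hb hb'
      exact hij (Option.some_injective _ (hb.2.symm.trans hb'.2))
  constructor
  · rintro ⟨τ, hfci, hall⟩
    refine ⟨?_, τ, hfci⟩
    rw [key τ hfci]
    congr 1
    apply Finset.Subset.antisymm
    · intro b hb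
      obtain ⟨i, _, hbi⟩ := Finset.mem_biUnion.mp hb; exact (Finset.mem_filter.mp hbi).1
    · intro b hb
      obtain ⟨l, hl⟩ := Option.ne_none_iff_exists'.mp (hall b hb)
      exact Finset.mem_biUnion.mpr ⟨l, hfci.1.2 b hb l hl, Finset.mem_filter.mpr ⟨hb, hl⟩⟩
  · rintro ⟨hsum, τ, hfci⟩
    refine ⟨τ, hfci, ?_⟩
    have hsub : ((Finset.Icc 1 n).biUnion fun i => D.filter fun b => τ b = some i) ⊆ D := by
      intro b hb
      obtain ⟨i, _, hbi⟩ := Finset.mem_biUnion.mp hb; exact (Finset.mem_filter.mp hbi).1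
    have heq := Finset.eq_of_subset_of_card_le hsub (by rw [← key τ hfci, hsum])
    intro b hb hnone
    rw [← heq] at hb
    obtain ⟨i, _, hbi⟩ := Finset.mem_biUnion.mp hb
    rw [Finset.mem_filter] at hbi
    exact (by simp [hnone] : τ b ≠ some i) hbi.2

end Schub
end

section
/- If PerfectTab(D,α) ≠ ∅, then there exists a tableau in PerfectTab(D,α) that is strictly increasing down each column (τ(i,j) < τ(i',j) whenever i < i' with both boxes in D). -/
namespace Schub

/-- Auxiliary: column-strictness condition. -/
def ColStrict (D : Finset (ℕ × ℕ)) (τ : ℕ × ℕ → Option ℕ) : Prop :=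
  ∀ b ∈ D, ∀ b' ∈ D, b.2 = b'.2 → b.1 < b'.1 →
    ∀ l l', τ b = some l → τ b' = some l' → l < l'

/-- Auxiliary: the weight of a perfect tableau is bounded. -/
lemma sum_weight_bound (n : ℕ) (D : Finset (ℕ × ℕ)) (hD : D ⊆ grid n)
    (α : ℕ → ℕ) (τ : ℕ × ℕ → Option ℕ) (hτ : IsPerfect n D τ α) :
    (∑ b ∈ D, b.1 * (τ b).getD 0) ≤ n * n * D.card := by
  calc ∑ b ∈ D, b.1 * (τ b).getD 0 ≤ ∑ _b ∈ D, n * n := by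
        apply Finset.sum_le_sum
        intro b hb
        have hg := hD hb
        simp only [grid, Finset.mem_product, Finset.mem_Icc] at hg
        obtain ⟨l, hl⟩ := Option.ne_none_iff_exists'.mp (hτ.2 b hb)
        have hln := hτ.1.1.2 b hb l hl
        simp only [Finset.mem_Icc] at hln
        rw [hl]
        simp only [Option.getD_some]
        exact Nat.mul_le_mul (by omega) (by omega)
    _ = n * n * D.card := by rw [Finset.sum_const, smul_eq_mul, mul_comm]

/-- Auxiliary: swapping an inversion strictly increases the weight. -/
lemma swap_step (n : ℕ) (D : Finset (ℕ × ℕ)) (α : ℕ → ℕ)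
    (τ : ℕ × ℕ → Option ℕ) (hτ : IsPerfect n D τ α) (hns : ¬ ColStrict D τ) :
    ∃ τ' : ℕ × ℕ → Option ℕ, IsPerfect n D τ' α ∧
      (∑ b ∈ D, b.1 * (τ b).getD 0) < ∑ b ∈ D, b.1 * (τ' b).getD 0 := by
  classical
  unfold ColStrict at hns
  push_neg at hns
  obtain ⟨b, hb, b', hb', hcol, hrow, l, l', hbl, hbl', hge⟩ := hns
  have hne : b ≠ b' := by
    intro hh; rw [hh] at hrow; exact lt_irrefl _ hrow
  have hll : l' < l := by
    have hnel : τ b' ≠ some l := hτ.1.2.2.1 b hb b' hb' hcol hne l hbl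
    have : l' ≠ l := by intro hh; exact hnel (hh ▸ hbl')
    omega
  set e := Equiv.swap b b' with he
  have heb : e b = b' := Equiv.swap_apply_left b b'
  have heb' : e b' = b := Equiv.swap_apply_right b b'
  have hefix : ∀ x, x ≠ b → x ≠ b' → e x = x := fun x h1 h2 =>
    Equiv.swap_apply_of_ne_of_ne h1 h2
  have hemem : ∀ x, x ∈ D → e x ∈ D := by
    intro x hx
    by_cases h1 : x = b
    · rw [h1, heb]; exact hb'
    by_cases h2 : x = b'
    · rw [h2, heb']; exact hb
    · rw [hefix x h1 h2]; exact hx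
  have hecol : ∀ x, (e x).2 = x.2 := by
    intro x
    by_cases h1 : x = b
    · rw [h1, heb, ← hcol]
    by_cases h2 : x = b'
    · rw [h2, heb', hcol]
    · rw [hefix x h1 h2]
  refine ⟨fun x => τ (e x), ⟨⟨⟨?_, ?_⟩, ?_, ?_, ?_⟩, ?_⟩, ?_⟩
  · -- support
    intro x hx
    have h1 : x ≠ b := by intro hh; exact hx (hh ▸ hb)
    have h2 : x ≠ b' := by intro hh; exact hx (hh ▸ hb')
    show τ (e x) = none
    rw [hefix x h1 h2]
    exact hτ.1.1.1 x hx
  · -- labels in range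
    intro x hx l₀ hl₀
    exact hτ.1.1.2 (e x) (hemem x hx) l₀ hl₀
  · -- flagged
    intro x hx l₀ hl₀
    have hl₀' : τ (e x) = some l₀ := hl₀
    have hfl := hτ.1.2.1
    by_cases h1 : x = b
    · subst h1
      rw [heb, hbl'] at hl₀'
      simp only [Option.some.injEq] at hl₀'
      have : l ≤ x.1 := hfl x hx l hbl
      omega
    by_cases h2 : x = b'
    · subst h2
      rw [heb', hbl] at hl₀'
      simp only [Option.some.injEq] at hl₀'
      have : l ≤ b.1 := hfl b hb l hbl
      omega
    · rw [hefix x h1 h2] at hl₀'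
      exact hfl x hx l₀ hl₀'
  · -- column injective
    intro x hx x' hx' hc hxe l₀ h1 h2
    exact hτ.1.2.2.1 (e x) (hemem x hx) (e x') (hemem x' hx')
      (by rw [hecol x, hecol x', hc])
      (fun hh => hxe (e.injective hh)) l₀ h1 h2
  · -- content
    intro i hi
    rw [← hτ.1.2.2.2 i hi]
    apply Finset.card_bij' (fun x _ => e x) (fun x _ => e x)
    · intro x hx
      simp only [Finset.mem_filter] at hx ⊢
      exact ⟨hemem x hx.1, hx.2⟩
    · intro x hx
      simp only [Finset.mem_filter] at hx ⊢
      refine ⟨hemem x hx.1, ?_⟩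
      rw [Equiv.swap_apply_self]
      exact hx.2
    · intro x _; exact Equiv.swap_apply_self b b' x
    · intro x _; exact Equiv.swap_apply_self b b' x
  · -- perfect
    intro x hx
    exact hτ.2 (e x) (hemem x hx)
  · -- weight increases
    have hb'2 : b' ∈ D.erase b := Finset.mem_erase.mpr ⟨fun hh => hne hh.symm, hb'⟩
    have key : ∀ g : ℕ × ℕ → Option ℕ,
        ∑ x ∈ D, x.1 * (g x).getD 0 =
          b.1 * (g b).getD 0 + (b'.1 * (g b').getD 0 +
            ∑ x ∈ (D.erase b).erase b', x.1 * (g x).getD 0) := by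
      intro g
      rw [← Finset.add_sum_erase D _ hb, ← Finset.add_sum_erase _ _ hb'2]
    rw [key τ, key (fun x => τ (e x))]
    have hrest : ∑ x ∈ (D.erase b).erase b', x.1 * (τ (e x)).getD 0 =
        ∑ x ∈ (D.erase b).erase b', x.1 * (τ x).getD 0 := by
      apply Finset.sum_congr rfl
      intro x hx
      simp only [Finset.mem_erase] at hx
      rw [hefix x hx.2.1 hx.1]
    rw [hrest, heb, heb', hbl, hbl']
    simp only [Option.getD_some]
    have hmul : b.1 * l + b'.1 * l' < b.1 * l' + b'.1 * l := by nlinarith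
    omega

/-- If `PerfectTab(D,α) ≠ ∅` then some perfect tableau of shape `D` and content `α` is
strictly increasing down each column. -/
theorem perfect_column_strict (n : ℕ) (D : Finset (ℕ × ℕ)) (hD : D ⊆ grid n)
    (α : ℕ → ℕ) (h : ∃ τ : ℕ × ℕ → Option ℕ, IsPerfect n D τ α) :
    ∃ τ : ℕ × ℕ → Option ℕ, IsPerfect n D τ α ∧
      ∀ b ∈ D, ∀ b' ∈ D, b.2 = b'.2 → b.1 < b'.1 →
        ∀ l l', τ b = some l → τ b' = some l' → l < l' := by
  classical
  obtain ⟨τ0, hτ0⟩ := h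
  have key : ∀ k : ℕ, ∀ τ : ℕ × ℕ → Option ℕ, IsPerfect n D τ α →
      n * n * D.card ≤ (∑ b ∈ D, b.1 * (τ b).getD 0) + k →
      ∃ τ' : ℕ × ℕ → Option ℕ, IsPerfect n D τ' α ∧ ColStrict D τ' := by
    intro k
    induction k with
    | zero =>
      intro τ hτ hbd
      by_cases hs : ColStrict D τ
      · exact ⟨τ, hτ, hs⟩
      · obtain ⟨τ', hτ', hlt⟩ := swap_step n D α τ hτ hs
        have := sum_weight_bound n D hD α τ' hτ'
        omega
    | succ k ih =>
      intro τ hτ hbd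
      by_cases hs : ColStrict D τ
      · exact ⟨τ, hτ, hs⟩
      · obtain ⟨τ', hτ', hlt⟩ := swap_step n D α τ hτ hs
        exact ih τ' hτ' (by omega)
  obtain ⟨τ', hτ', hs⟩ := key (n * n * D.card) τ0 hτ0 (by omega)
  exact ⟨τ', hτ', hs⟩

end Schub
end

section
/- Let D ⊆ [n]² and α ∈ ℤ_{≥0}^n. Then PerfectTab(D,α) ≠ ∅ if and only if α₁ + ⋯ + α_n = #D and P(D,α) contains an integer point. -/
namespace Schub

noncomputable def nth (S : Finset ℕ) (k : ℕ) : ℕ :=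
  if h : k < S.card then S.orderEmbOfFin rfl ⟨k, h⟩ else 0

lemma nth_mem {S : Finset ℕ} {k : ℕ} (h : k < S.card) : nth S k ∈ S := by
  rw [nth, dif_pos h]; exact S.orderEmbOfFin_mem rfl _

lemma nth_inj {S : Finset ℕ} {k k' : ℕ} (h : k < S.card) (h' : k' < S.card)
    (he : nth S k = nth S k') : k = k' := by
  unfold nth at he
  rw [dif_pos h, dif_pos h'] at he
  have := (S.orderEmbOfFin rfl).injective he
  simpa using this

lemma nth_le {S : Finset ℕ} {k s : ℕ} (h : k < S.card)
    (hc : k + 1 ≤ (S.filter (· ≤ s)).card) : nth S k ≤ s := by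
  by_contra hlt
  push_neg at hlt
  have hsub : S.filter (· ≤ s) ⊆ (Finset.range k).image (nth S) := by
    intro i hi
    rw [Finset.mem_filter] at hi
    have : i ∈ Set.range (S.orderEmbOfFin (rfl : S.card = S.card)) := by
      rw [Finset.range_orderEmbOfFin]; exact hi.1
    obtain ⟨j, hj⟩ := this
    have hji : nth S (j : ℕ) = i := by
      rw [nth, dif_pos j.2, ← hj]
    have hjk : (j : ℕ) < k := by
      by_contra hge
      push_neg at hge
      have hmono : nth S k ≤ nth S (j : ℕ) := by
        rw [nth, dif_pos h, nth, dif_pos j.2]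
        exact (S.orderEmbOfFin rfl).monotone (by exact hge)
      rw [hji] at hmono
      omega
    exact Finset.mem_image.mpr ⟨j, Finset.mem_range.mpr hjk, hji⟩
  have h1 := Finset.card_le_card hsub
  have h2 : ((Finset.range k).image (nth S)).card ≤ k := by
    simpa using Finset.card_image_le (s := Finset.range k) (f := nth S)
  omega

/-- label set of column `j` -/
noncomputable def Lcol (n : ℕ) (x : ℕ → ℕ → ℝ) (j : ℕ) : Finset ℕ :=
  (Finset.Icc 1 n).filter fun i => x i j = 1

/-- rank of row r among boxes of column j -/
def rk (D : Finset (ℕ × ℕ)) (j r : ℕ) : ℕ :=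
  (D.filter fun b => b.2 = j ∧ b.1 ≤ r).card

noncomputable def buildTab (n : ℕ) (D : Finset (ℕ × ℕ)) (x : ℕ → ℕ → ℝ) :
    ℕ × ℕ → Option ℕ :=
  fun b => if b ∈ D then some (nth (Lcol n x b.2) (rk D b.2 b.1 - 1)) else none

section Bwd
variable {n : ℕ} {D : Finset (ℕ × ℕ)} {α : ℕ → ℕ} {x : ℕ → ℕ → ℝ}

lemma bwd (hD : D ⊆ grid n) (hsum : (∑ i ∈ Finset.Icc 1 n, α i) = D.card)
    (hx : InP n D (fun i => (α i : ℝ)) x)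
    (hint : ∀ i ∈ Finset.Icc 1 n, ∀ j ∈ Finset.Icc 1 n, ∃ z : ℤ, x i j = (z : ℝ)) :
    ∃ τ : ℕ × ℕ → Option ℕ, IsPerfect n D τ α := by
  classical
  obtain ⟨hbd, hrow, hcol⟩ := hx
  -- x is 0/1 valued on the grid
  have h01 : ∀ i ∈ Finset.Icc 1 n, ∀ j ∈ Finset.Icc 1 n, x i j = 0 ∨ x i j = 1 := by
    intro i hi j hj
    obtain ⟨z, hz⟩ := hint i hi j hj
    obtain ⟨h0, h1⟩ := hbd i hi j hj
    rw [hz] at h0 h1 ⊢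
    have hz0 : (0:ℤ) ≤ z := by exact_mod_cast h0
    have hz1 : z ≤ 1 := by exact_mod_cast h1
    interval_cases z <;> simp
  -- membership of boxes in the grid
  have hbox : ∀ b ∈ D, b.1 ∈ Finset.Icc 1 n ∧ b.2 ∈ Finset.Icc 1 n := by
    intro b hb
    have := hD hb
    simpa [grid, Finset.mem_product] using this
  -- sums of x over subsets of Icc 1 n equal cards of Lcol-filters
  have hsumfilter : ∀ j ∈ Finset.Icc 1 n, ∀ s ∈ Finset.Icc 1 n,
      ∑ i ∈ Finset.Icc 1 s, x i j = (((Lcol n x j).filter (· ≤ s)).card : ℝ) := by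
    intro j hj s hs
    have hss : Finset.Icc 1 s ⊆ Finset.Icc 1 n := by
      rw [Finset.mem_Icc] at hs
      exact Finset.Icc_subset_Icc_right hs.2
    have : ((Lcol n x j).filter (· ≤ s)) = (Finset.Icc 1 s).filter fun i => x i j = 1 := by
      ext i
      rw [Finset.mem_Icc] at hs
      simp only [Lcol, Finset.mem_filter, Finset.mem_Icc]
      constructor
      · rintro ⟨⟨⟨h1, _⟩, h2⟩, h3⟩; exact ⟨⟨h1, h3⟩, h2⟩
      · rintro ⟨⟨h1, h3⟩, h2⟩; exact ⟨⟨⟨h1, h3.trans hs.2⟩, h2⟩, h3⟩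
    rw [this, ← Finset.sum_boole]
    refine Finset.sum_congr rfl fun i hi => ?_
    rcases h01 i (hss hi) j hj with h | h <;> simp [h]
  -- Lcol is contained in Icc 1 n
  have hLsub : ∀ j, Lcol n x j ⊆ Finset.Icc 1 n := fun j => Finset.filter_subset _ _
  have hn_mem : ∀ j ∈ Finset.Icc 1 n, True := fun _ _ => trivial
  -- column cardinality inequality
  have hcolle : ∀ j ∈ Finset.Icc 1 n,
      (D.filter fun b => b.2 = j).card ≤ (Lcol n x j).card := by
    intro j hj
    rcases Nat.eq_zero_or_pos n with hn | hn
    · simp [Finset.mem_Icc] at hj; omega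
    have hnIcc : n ∈ Finset.Icc 1 n := by rw [Finset.mem_Icc]; omega
    have h1 := hcol j hj n hnIcc
    rw [hsumfilter j hj n hnIcc] at h1
    have h2 : (D.filter fun b => b.2 = j ∧ b.1 ≤ n) = D.filter fun b => b.2 = j := by
      apply Finset.filter_congr
      intro b hb
      have := (hbox b hb).1
      rw [Finset.mem_Icc] at this
      simp [this.2]
    have h3 : ((Lcol n x j).filter (· ≤ n)) = Lcol n x j := by
      apply Finset.filter_true_of_mem
      intro i hi
      have := hLsub j hi
      rw [Finset.mem_Icc] at this
      exact this.2
    rw [h2, h3] at h1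
    exact_mod_cast h1
  -- the total of Lcol cards equals D.card
  have hLtot : ∑ j ∈ Finset.Icc 1 n, (Lcol n x j).card = D.card := by
    have hreal : (↑(∑ j ∈ Finset.Icc 1 n, (Lcol n x j).card) : ℝ)
        = ∑ i ∈ Finset.Icc 1 n, (α i : ℝ) := by
      push_cast
      calc (∑ j ∈ Finset.Icc 1 n, ((Lcol n x j).card : ℝ))
          = ∑ j ∈ Finset.Icc 1 n, ∑ i ∈ Finset.Icc 1 n, x i j := by
            refine Finset.sum_congr rfl fun j hj => ?_
            have hn : n ∈ Finset.Icc 1 n := by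
              rw [Finset.mem_Icc] at hj ⊢; omega
            rw [hsumfilter j hj n hn]
            have h3 : Finset.filter (fun i => i ≤ n) (Lcol n x j) = Lcol n x j := by
              apply Finset.filter_true_of_mem
              intro i hi
              have := hLsub j hi
              rw [Finset.mem_Icc] at this
              exact this.2
            rw [h3]
        _ = ∑ i ∈ Finset.Icc 1 n, ∑ j ∈ Finset.Icc 1 n, x i j := Finset.sum_comm
        _ = ∑ i ∈ Finset.Icc 1 n, (α i : ℝ) := by
            refine Finset.sum_congr rfl fun i hi => hrow i hi
    have : (∑ j ∈ Finset.Icc 1 n, (Lcol n x j).card) = ∑ i ∈ Finset.Icc 1 n, α i := by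
      exact_mod_cast hreal
    rw [this, hsum]
  -- total of column cards of D equals D.card
  have hDtot : ∑ j ∈ Finset.Icc 1 n, (D.filter fun b => b.2 = j).card = D.card := by
    exact (Finset.card_eq_sum_card_fiberwise fun b hb => (hbox b hb).2).symm
  -- hence per-column equality
  have hLcard : ∀ j ∈ Finset.Icc 1 n,
      (D.filter fun b => b.2 = j).card = (Lcol n x j).card := by
    have := (Finset.sum_eq_sum_iff_of_le hcolle).mp (by rw [hDtot, hLtot])
    exact this
  -- rank basics
  have hrk1 : ∀ b ∈ D, 1 ≤ rk D b.2 b.1 := by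
    intro b hb
    have : b ∈ D.filter fun c => c.2 = b.2 ∧ c.1 ≤ b.1 := by
      rw [Finset.mem_filter]; exact ⟨hb, rfl, le_refl _⟩
    have := Finset.card_pos.mpr ⟨b, this⟩
    exact this
  have hrkle : ∀ b ∈ D, rk D b.2 b.1 ≤ (Lcol n x b.2).card := by
    intro b hb
    have h1 : rk D b.2 b.1 ≤ (D.filter fun c => c.2 = b.2).card := by
      apply Finset.card_le_card
      intro c hc
      rw [Finset.mem_filter] at hc ⊢
      exact ⟨hc.1, hc.2.1⟩
    rw [hLcard b.2 (hbox b hb).2] at h1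
    exact h1
  have hlt : ∀ b ∈ D, rk D b.2 b.1 - 1 < (Lcol n x b.2).card := by
    intro b hb
    have := hrk1 b hb
    have := hrkle b hb
    omega
  -- strict monotonicity of rank
  have hrkmono : ∀ b ∈ D, ∀ b' ∈ D, b.2 = b'.2 → b.1 < b'.1 →
      rk D b.2 b.1 < rk D b'.2 b'.1 := by
    intro b hb b' hb' hcol2 hlt'
    rw [hcol2]
    apply Finset.card_lt_card
    constructor
    · intro c hc
      rw [Finset.mem_filter] at hc ⊢
      exact ⟨hc.1, hc.2.1, hc.2.2.trans (le_of_lt hlt')⟩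
    · intro hsub
      have hb'mem : b' ∈ D.filter fun c => c.2 = b'.2 ∧ c.1 ≤ b'.1 := by
        rw [Finset.mem_filter]; exact ⟨hb', rfl, le_refl _⟩
      have := hsub hb'mem
      rw [Finset.mem_filter] at this
      omega
  -- the flag bound on nth
  have hF1 : ∀ b ∈ D, rk D b.2 b.1 ≤ ((Lcol n x b.2).filter (· ≤ b.1)).card := by
    intro b hb
    have h1 := hcol b.2 (hbox b hb).2 b.1 (hbox b hb).1
    rw [hsumfilter b.2 (hbox b hb).2 b.1 (hbox b hb).1] at h1
    exact_mod_cast h1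
  set τ := buildTab n D x with hτ
  have hτmem : ∀ b ∈ D, τ b = some (nth (Lcol n x b.2) (rk D b.2 b.1 - 1)) := by
    intro b hb
    rw [hτ, buildTab, if_pos hb]
  have hτval : ∀ b ∈ D, ∀ l, τ b = some l → l = nth (Lcol n x b.2) (rk D b.2 b.1 - 1) := by
    intro b hb l hl
    rw [hτmem b hb] at hl
    exact (Option.some_inj.mp hl).symm
  refine ⟨τ, ⟨⟨?_, ?_, ?_, ?_⟩, ?_⟩⟩
  · -- IsTab
    constructor
    · intro b hb; rw [hτ, buildTab, if_neg hb]
    · intro b hb l hl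
      rw [hτval b hb l hl]
      exact hLsub b.2 (nth_mem (hlt b hb))
  · -- Flagged
    intro b hb l hl
    rw [hτval b hb l hl]
    apply nth_le (hlt b hb)
    have := hrk1 b hb
    have := hF1 b hb
    omega
  · -- ColInj
    intro b hb b' hb' hc2 hne l hl hl'
    have e1 := hτval b hb l hl
    have e2 := hτval b' hb' l hl'
    have hne1 : b.1 ≠ b'.1 := by
      intro h
      exact hne (Prod.ext h hc2)
    have key : rk D b.2 b.1 - 1 = rk D b'.2 b'.1 - 1 := by
      apply nth_inj (hlt b hb) (hc2 ▸ hlt b' hb')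
      rw [← e1, hc2]
      rw [← e2]
    have k1 := hrk1 b hb
    have k1' := hrk1 b' hb'
    rcases lt_or_gt_of_ne hne1 with h | h
    · have := hrkmono b hb b' hb' hc2 h
      omega
    · have := hrkmono b' hb' b hb hc2.symm h
      omega
  · -- HasContent
    intro i hi
    -- fiberwise over columns
    have hfib : (D.filter fun b => τ b = some i).card
        = ∑ j ∈ Finset.Icc 1 n, (D.filter fun b => b.2 = j ∧ τ b = some i).card := by
      have hm : ∀ b ∈ D.filter (fun b => τ b = some i), b.2 ∈ Finset.Icc 1 n := by
        intro b hb
        exact (hbox b (Finset.mem_filter.mp hb).1).2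
      rw [Finset.card_eq_sum_card_fiberwise hm]
      refine Finset.sum_congr rfl fun j hj => ?_
      rw [Finset.filter_filter]
      congr 1
      apply Finset.filter_congr
      intro b _; tauto
    -- per-column fiber count
    have hcolcard : ∀ j ∈ Finset.Icc 1 n,
        (D.filter fun b => b.2 = j ∧ τ b = some i).card
          = if i ∈ Lcol n x j then 1 else 0 := by
      intro j hj
      set f : ℕ × ℕ → ℕ := fun b => nth (Lcol n x j) (rk D j b.1 - 1) with hf
      set Dj := D.filter fun b => b.2 = j with hDj
      have hsubD : ∀ b ∈ Dj, b ∈ D ∧ b.2 = j := by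
        intro b hb; rw [hDj, Finset.mem_filter] at hb; exact hb
      have hfilter_eq : (D.filter fun b => b.2 = j ∧ τ b = some i)
          = Dj.filter fun b => f b = i := by
        rw [hDj, Finset.filter_filter]
        apply Finset.filter_congr
        intro b hb
        constructor
        · rintro ⟨h2, h3⟩
          refine ⟨h2, ?_⟩
          have h4 := hτval b hb i h3
          show nth (Lcol n x j) (rk D j b.1 - 1) = i
          rw [← h2]
          exact h4.symm
        · rintro ⟨h2, h3⟩
          refine ⟨h2, ?_⟩
          rw [hτmem b hb, h2]
          exact congrArg some h3
      have hinj : Set.InjOn f ↑Dj := by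
        intro b hb b' hb' he
        rw [Finset.mem_coe] at hb hb'
        obtain ⟨hbD, hb2⟩ := hsubD b hb
        obtain ⟨hb'D, hb'2⟩ := hsubD b' hb'
        by_contra hne
        have hne1 : b.1 ≠ b'.1 := fun h => hne (Prod.ext h (hb2.trans hb'2.symm))
        have hltb := hlt b hbD
        have hltb' := hlt b' hb'D
        rw [hb2] at hltb
        rw [hb'2] at hltb'
        have hkey : rk D j b.1 - 1 = rk D j b'.1 - 1 := nth_inj hltb hltb' he
        have k1 := hrk1 b hbD
        have k1' := hrk1 b' hb'D
        rw [hb2] at k1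
        rw [hb'2] at k1'
        rcases lt_or_gt_of_ne hne1 with h | h
        · have := hrkmono b hbD b' hb'D (hb2.trans hb'2.symm) h
          rw [hb2, hb'2] at this
          omega
        · have := hrkmono b' hb'D b hbD (hb'2.trans hb2.symm) h
          rw [hb2, hb'2] at this
          omega
      have himsub : Dj.image f ⊆ Lcol n x j := by
        intro l hl
        obtain ⟨b, hb, rfl⟩ := Finset.mem_image.mp hl
        obtain ⟨hbD, hb2⟩ := hsubD b hb
        have hh := hlt b hbD
        rw [hb2] at hh
        show nth (Lcol n x j) (rk D j b.1 - 1) ∈ Lcol n x j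
        exact nth_mem hh
      have hcardim : (Dj.image f).card = (Lcol n x j).card := by
        rw [Finset.card_image_of_injOn hinj, hDj, hLcard j hj]
      have him : Dj.image f = Lcol n x j :=
        Finset.eq_of_subset_of_card_le himsub (le_of_eq hcardim.symm)
      rw [hfilter_eq]
      by_cases hiL : i ∈ Lcol n x j
      · rw [if_pos hiL]
        rw [← him] at hiL
        obtain ⟨b0, hb0, hb0f⟩ := Finset.mem_image.mp hiL
        apply le_antisymm
        · rw [Finset.card_le_one]
          intro a ha b hb
          rw [Finset.mem_filter] at ha hb
          exact hinj (Finset.mem_coe.mpr ha.1) (Finset.mem_coe.mpr hb.1)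
            (ha.2.trans hb.2.symm)
        · exact Finset.card_pos.mpr ⟨b0, Finset.mem_filter.mpr ⟨hb0, hb0f⟩⟩
      · rw [if_neg hiL]
        rw [Finset.card_eq_zero, Finset.filter_eq_empty_iff]
        intro b hb hfb
        apply hiL
        rw [← him]
        exact Finset.mem_image.mpr ⟨b, hb, hfb⟩
    -- now sum up
    have hreal : ((∑ j ∈ Finset.Icc 1 n, if x i j = 1 then (1:ℕ) else 0 : ℕ) : ℝ)
        = (α i : ℝ) := by
      rw [Nat.cast_sum]
      have hr := hrow i hi
      simp only [] at hr
      rw [← hr]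
      refine Finset.sum_congr rfl fun j hj => ?_
      rcases h01 i hi j hj with h | h <;> simp [h]
    have hnat : (∑ j ∈ Finset.Icc 1 n, if x i j = 1 then (1:ℕ) else 0) = α i := by
      exact_mod_cast hreal
    rw [hfib, ← hnat]
    refine Finset.sum_congr rfl fun j hj => ?_
    rw [hcolcard j hj]
    have hmem : i ∈ Lcol n x j ↔ x i j = 1 := by
      simp [Lcol, Finset.mem_filter, hi]
    simp [hmem]
  · -- perfect
    intro b hb
    rw [hτmem b hb]
    simp

end Bwd

section Fwd
variable {n : ℕ} {D : Finset (ℕ × ℕ)} {τ : ℕ × ℕ → Option ℕ} {α : ℕ → ℕ}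

lemma fwd (hD : D ⊆ grid n) (hp : IsPerfect n D τ α) :
    ((∑ i ∈ Finset.Icc 1 n, α i) = D.card ∧
      ∃ x : ℕ → ℕ → ℝ, InP n D (fun i => (α i : ℝ)) x ∧
        ∀ i ∈ Finset.Icc 1 n, ∀ j ∈ Finset.Icc 1 n, ∃ z : ℤ, x i j = (z : ℝ)) := by
  obtain ⟨⟨⟨htab1, htab2⟩, hflag, hcinj, hcont⟩, hnone⟩ := hp
  -- every b ∈ D has a unique label getD
  have hget : ∀ b ∈ D, ∀ i, ((τ b).getD 0 = i ↔ τ b = some i) := by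
    intro b hb i
    cases hτ : τ b with
    | none => exact absurd hτ (hnone b hb)
    | some l => simp [hτ]
  have hmemIcc : ∀ b ∈ D, (τ b).getD 0 ∈ Finset.Icc 1 n := by
    intro b hb
    cases hτ : τ b with
    | none => exact absurd hτ (hnone b hb)
    | some l => simpa using htab2 b hb l hτ
  have hsum : (∑ i ∈ Finset.Icc 1 n, α i) = D.card := by
    rw [Finset.card_eq_sum_card_fiberwise hmemIcc]
    refine Finset.sum_congr rfl fun i hi => ?_
    rw [← hcont i hi]
    congr 1
    apply Finset.filter_congr
    intro b hb; simp [hget b hb i]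
  refine ⟨hsum, fun i j => ((D.filter fun b => b.2 = j ∧ τ b = some i).card : ℝ), ⟨?_, ?_, ?_⟩, ?_⟩
  · -- 0 ≤ x ≤ 1
    intro i _ j _
    refine ⟨by positivity, ?_⟩
    have : (D.filter fun b => b.2 = j ∧ τ b = some i).card ≤ 1 := by
      rw [Finset.card_le_one]
      intro a ha b hb
      simp only [Finset.mem_filter] at ha hb
      by_contra hne
      exact hcinj a ha.1 b hb.1 (ha.2.1.trans hb.2.1.symm) hne i ha.2.2 hb.2.2
    simp only []
    exact_mod_cast this
  · -- row sums
    intro i hi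
    have goal : (∑ j ∈ Finset.Icc 1 n, (D.filter fun b => b.2 = j ∧ τ b = some i).card) = α i := by
      rw [← hcont i hi]
      have hm : ∀ b ∈ D.filter (fun b => τ b = some i), b.2 ∈ Finset.Icc 1 n := by
        intro b hb
        have := hD (Finset.mem_filter.mp hb).1
        simp only [grid, Finset.mem_product] at this
        exact this.2
      rw [Finset.card_eq_sum_card_fiberwise hm]
      refine (Finset.sum_congr rfl fun j hj => ?_).symm
      congr 1
      rw [Finset.filter_filter]
      apply Finset.filter_congr
      intro b _; tauto
    show (∑ j ∈ Finset.Icc 1 n, ((D.filter fun b => b.2 = j ∧ τ b = some i).card : ℝ)) = (α i : ℝ)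
    rw [← Nat.cast_sum, goal]
  · -- column constraints
    intro j hj s hs
    rw [← Nat.cast_sum]
    have key : (D.filter fun b => b.2 = j ∧ b.1 ≤ s).card ≤
        ∑ i ∈ Finset.Icc 1 s, (D.filter fun b => b.2 = j ∧ τ b = some i).card := by
      have hmem : ∀ b ∈ D.filter (fun b => b.2 = j ∧ b.1 ≤ s),
          (τ b).getD 0 ∈ Finset.Icc 1 s := by
        intro b hb
        rw [Finset.mem_filter] at hb
        have h1 := hmemIcc b hb.1
        cases hτ : τ b with
        | none => exact absurd hτ (hnone b hb.1)
        | some l =>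
          have := hflag b hb.1 l hτ
          simp only [hτ, Option.getD_some] at h1 ⊢
          rw [Finset.mem_Icc] at h1 ⊢
          exact ⟨h1.1, this.trans hb.2.2⟩
      rw [Finset.card_eq_sum_card_fiberwise hmem]
      refine Finset.sum_le_sum fun i _ => ?_
      apply Finset.card_le_card
      intro b hb
      rw [Finset.filter_filter, Finset.mem_filter] at hb
      rw [Finset.mem_filter]
      exact ⟨hb.1, hb.2.1.1, (hget b hb.1 i).mp hb.2.2⟩
    exact_mod_cast key
  · intro i _ j _
    exact ⟨_, rfl⟩

end Fwd

/-- `PerfectTab(D,α) ≠ ∅` iff `α₁+⋯+α_n = #D` and `P(D,α)` contains an integer point. -/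
theorem perfect_iff_integer_point (n : ℕ) (D : Finset (ℕ × ℕ)) (hD : D ⊆ grid n)
    (α : ℕ → ℕ) :
    (∃ τ : ℕ × ℕ → Option ℕ, IsPerfect n D τ α) ↔
      ((∑ i ∈ Finset.Icc 1 n, α i) = D.card ∧
        ∃ x : ℕ → ℕ → ℝ, InP n D (fun i => (α i : ℝ)) x ∧
          ∀ i ∈ Finset.Icc 1 n, ∀ j ∈ Finset.Icc 1 n, ∃ z : ℤ, x i j = (z : ℝ)) := by
  constructor
  · rintro ⟨τ, hp⟩
    exact fwd hD hp
  · rintro ⟨hsum, x, hx, hint⟩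
    exact bwd hD hsum hx hint

end Schub
end
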